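/- In the symmetric case m1 = m2 = m/k with k > 2, the pure price of anarchy at the unique equilibrium equals PPoA = √((1+p)²/(16(k−2)²) + 4(3−p)/(16(k−2)) + 1/4) + 1/2 − (p+1)/(4(k−2)), and PPoA tends to 1 as k → +∞. -/

import Mathlib

/-!
Write `a = m/k` for the common pool size. A pool's reward is a quotient `N/D` in its own
infiltration `x`, so at a best response `x ∈ [0, a]` the marginal `N'D - ND'` satisfies the
Karush–Kuhn–Tucker conditions. This marginal is negative at `x = a`, and the conditions cannot
hold with `x = 0` against a best-responding opponent, so both pools infiltrate strictly inside
`(0, a)` and both marginals vanish. Their difference is `x - y` times a negative factor, so the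
equilibrium is symmetric and `x` solves `2(1-p)x² - (2k-1-p)ax + a² = 0`. In terms of the
price of anarchy `P = a/(a - (1-p)x)` this is `2(k-2)P² - (2k-5-p)P - 2 = 0`, whose unique
positive root is the closed formula. As `k → ∞` both fractions in it vanish, leaving `√(1/4) + 1/2`.
-/

/-- Average reward of pool 1 in the two-player miner's dilemma with betrayal,
where the total mining power is `m1 + m2 + t`. -/
noncomputable def r1 (m1 m2 t p x1 x2 : ℝ) : ℝ :=
  (m1*m2 + m1*x1 + p*m2*x2 - (1-p)*x1^2 - (1-p)*x1*x2) /
    (((m1+m2+t) - (1-p)*(x1+x2)) * (m1*m2 + m1*x1 + m2*x2))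

/-- Average reward of pool 2. -/
noncomputable def r2 (m1 m2 t p x1 x2 : ℝ) : ℝ :=
  (m1*m2 + m2*x2 + p*m1*x1 - (1-p)*x2^2 - (1-p)*x1*x2) /
    (((m1+m2+t) - (1-p)*(x1+x2)) * (m1*m2 + m1*x1 + m2*x2))

/-- `(x1, x2)` is a pure Nash equilibrium of the two-player miner's dilemma game. -/
noncomputable def IsNash (m1 m2 t p x1 x2 : ℝ) : Prop :=
  x1 ∈ Set.Icc 0 m1 ∧ x2 ∈ Set.Icc 0 m2 ∧
  (∀ x ∈ Set.Icc (0:ℝ) m1, r1 m1 m2 t p x x2 ≤ r1 m1 m2 t p x1 x2) ∧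
  (∀ x ∈ Set.Icc (0:ℝ) m2, r2 m1 m2 t p x1 x ≤ r2 m1 m2 t p x1 x2)

open Filter Set Topology

theorem IsMaxOn.hasDerivAt_mul_sub_nonpos {f : ℝ → ℝ} {s : Set ℝ} {f' x y : ℝ}
    (hmax : IsMaxOn f s x) (hf : HasDerivAt f f' x) (hseg : segment ℝ x y ⊆ s) :
    f' * (y - x) ≤ 0 := by
  simpa [mul_comm] using hmax.localize.hasFDerivWithinAt_nonpos
    hf.hasFDerivAt.hasFDerivWithinAt (sub_mem_posTangentConeAt_of_segment_subset hseg)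

theorem IsMaxOn.hasDerivAt_nonpos_of_lt {f : ℝ → ℝ} {f' lo hi x : ℝ}
    (hmax : IsMaxOn f (Icc lo hi) x) (hf : HasDerivAt f f' x) (hx : x ∈ Icc lo hi)
    (hxhi : x < hi) : f' ≤ 0 := by
  have := hmax.hasDerivAt_mul_sub_nonpos hf <|
    (convex_Icc lo hi).segment_subset hx ⟨hx.1.trans hxhi.le, le_rfl⟩
  nlinarith

theorem IsMaxOn.hasDerivAt_nonneg_of_lt {f : ℝ → ℝ} {f' lo hi x : ℝ}
    (hmax : IsMaxOn f (Icc lo hi) x) (hf : HasDerivAt f f' x) (hx : x ∈ Icc lo hi)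
    (hlox : lo < x) : 0 ≤ f' := by
  have := hmax.hasDerivAt_mul_sub_nonpos hf <|
    (convex_Icc lo hi).segment_subset hx ⟨le_rfl, hlox.le.trans hx.2⟩
  nlinarith

def symRewardNum (a p x y : ℝ) : ℝ := a*a + a*x + p*a*y - (1-p)*x^2 - (1-p)*x*y

def symRewardDen (a k p x y : ℝ) : ℝ := (k*a - (1-p)*(x+y)) * (a*a + a*x + a*y)

noncomputable def symReward (a k p x y : ℝ) : ℝ := symRewardNum a p x y / symRewardDen a k p x y

/-- `N'D - ND'` for `symReward = N/D` as a function of `x`. -/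
def symMarginal (a k p x y : ℝ) : ℝ :=
  (a - 2*(1-p)*x - (1-p)*y) * symRewardDen a k p x y
    - symRewardNum a p x y * (-(1-p) * (a*a + a*x + a*y) + (k*a - (1-p)*(x+y)) * a)

theorem r1_eq_symReward {a t k p x y : ℝ} (h : a + a + t = k * a) :
    r1 a a t p x y = symReward a k p x y := by
  rw [r1, symReward, symRewardNum, symRewardDen, h]

theorem r2_eq_symReward {a t k p x y : ℝ} (h : a + a + t = k * a) :
    r2 a a t p x y = symReward a k p y x := by
  rw [r2, symReward, symRewardNum, symRewardDen, h]
  congr 1 <;> ring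

noncomputable def ppoa (m1 m2 p x1 x2 : ℝ) : ℝ := (m1 + m2) / (m1 + m2 - (1-p)*(x1 + x2))

noncomputable def ppoaFormula (p k : ℝ) : ℝ :=
  √((1+p)^2/(16*(k-2)^2) + 4*(3-p)/(16*(k-2)) + 1/4) + 1/2 - (p+1)/(4*(k-2))

theorem eq_ppoaFormula_of_quadratic {k p P : ℝ} (hk : 2 < k) (hP : 0 < P)
    (h : 2*(k-2)*P^2 - (2*k-5-p)*P - 2 = 0) : P = ppoaFormula p k := by
  have hk2 : 0 < k - 2 := by linarith
  have hsq : (1+p)^2/(16*(k-2)^2) + 4*(3-p)/(16*(k-2)) + 1/4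
      = (P - (2*k-5-p)/(4*(k-2)))^2 := by
    field_simp
    linear_combination (-128*(k-2)) * h
  -- With `c = (2k-5-p)/(4(k-2))`, `P (P - 2c) = 1/(k-2) > 0` forces `P > 2c`, hence `P - c ≥ 0`.
  have hPc : 0 ≤ P - (2*k-5-p)/(4*(k-2)) := by
    have : P * (P - 2 * ((2*k-5-p)/(4*(k-2)))) = 1/(k-2) := by
      field_simp; linear_combination 2 * h
    have : 0 < P - 2 * ((2*k-5-p)/(4*(k-2))) :=
      pos_of_mul_pos_right (this ▸ by positivity) hP.le
    rcases le_or_gt 0 ((2*k-5-p)/(4*(k-2))) with hc | hc <;> linarith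
  rw [ppoaFormula, hsq, Real.sqrt_sq hPc]
  field_simp
  ring

theorem tendsto_ppoaFormula (p : ℝ) : Tendsto (ppoaFormula p) atTop (𝓝 1) := by
  have hlin : Tendsto (fun k : ℝ => k - 2) atTop atTop :=
    tendsto_atTop_add_const_right _ _ tendsto_id
  have h1 : Tendsto (fun k : ℝ => (1+p)^2/(16*(k-2)^2)) atTop (𝓝 0) :=
    tendsto_const_nhds.div_atTop
      (((tendsto_pow_atTop two_ne_zero).comp hlin).const_mul_atTop (by norm_num))
  have h2 : Tendsto (fun k : ℝ => 4*(3-p)/(16*(k-2))) atTop (𝓝 0) :=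
    tendsto_const_nhds.div_atTop (hlin.const_mul_atTop (by norm_num))
  have h3 : Tendsto (fun k : ℝ => (p+1)/(4*(k-2))) atTop (𝓝 0) :=
    tendsto_const_nhds.div_atTop (hlin.const_mul_atTop (by norm_num))
  have := ((((h1.add h2).add_const (1/4)).sqrt).add_const (1/2)).sub h3
  rwa [show √(0 + 0 + 1/4 : ℝ) + 1/2 - 0 = 1 by
    rw [show (0 + 0 + 1/4 : ℝ) = (1/2)^2 by norm_num, Real.sqrt_sq (by norm_num)]; norm_num] at this

section SymmetricGame

variable {a k p x y : ℝ}

theorem hasDerivAt_symReward (hD : symRewardDen a k p x y ≠ 0) :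
    HasDerivAt (fun u => symReward a k p u y)
      (symMarginal a k p x y / symRewardDen a k p x y ^ 2) x := by
  have hN : HasDerivAt (fun u => symRewardNum a p u y) (a - 2*(1-p)*x - (1-p)*y) x :=
    (((((hasDerivAt_id x).const_mul a).const_add (a*a)).add_const (p*a*y)).sub
      ((hasDerivAt_pow 2 x).const_mul (1-p)) |>.sub
        (((hasDerivAt_id x).const_mul (1-p)).mul_const y)).congr_deriv
          (by simp only [mul_one, Nat.cast_ofNat, Nat.add_one_sub_one, pow_one]; ring)
  have hD' : HasDerivAt (fun u => symRewardDen a k p u y)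
      (-(1-p) * (a*a + a*x + a*y) + (k*a - (1-p)*(x+y)) * a) x :=
    (((((hasDerivAt_id x).add_const y).const_mul (1-p)).const_sub (k*a)).mul
      (((hasDerivAt_id x).const_mul a).const_add (a*a) |>.add_const (a*y))).congr_deriv
        (by simp)
  exact hN.div hD' hD

theorem symRewardDen_pos (ha : 0 < a) (hk : 2 < k) (hp0 : 0 ≤ p)
    (hx : x ∈ Icc 0 a) (hy : y ∈ Icc 0 a) : 0 < symRewardDen a k p x y := by
  obtain ⟨hx0, hxa⟩ := hx
  obtain ⟨hy0, hya⟩ := hy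
  apply mul_pos <;> nlinarith

theorem symMarginal_right_neg (ha : 0 < a) (hk : 2 < k) (hp0 : 0 ≤ p) (hp1 : p < 1)
    (hy0 : 0 ≤ y) (hya : y ≤ a) : symMarginal a k p a y < 0 := by
  have hid : symMarginal a k p a y = -((1-p) * a) * ((k-2) * a * (3*a^2 + 2*a*y + y^2)
      + 2*p*a^3 + p*a*y^2 + (1-p)*(a^3 - y^3)) := by
    simp only [symMarginal, symRewardNum, symRewardDen]; ring
  have hcube : y^3 ≤ a^3 := pow_le_pow_left₀ hy0 hya 3
  rw [hid, neg_mul, neg_lt_zero]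
  apply mul_pos (mul_pos (by linarith) ha)
  have : 0 < (k-2) * a * (3*a^2 + 2*a*y + y^2) :=
    mul_pos (mul_pos (by linarith) ha) (by positivity)
  have : 0 ≤ (1-p)*(a^3 - y^3) := mul_nonneg (by linarith) (by linarith)
  positivity

theorem symMarginal_kkt_of_isMaxOn (ha : 0 < a) (hk : 2 < k) (hp0 : 0 ≤ p) (hp1 : p < 1)
    (hx : x ∈ Icc 0 a) (hy : y ∈ Icc 0 a)
    (hmax : IsMaxOn (fun u => symReward a k p u y) (Icc 0 a) x) :
    x < a ∧ symMarginal a k p x y ≤ 0 ∧ x * symMarginal a k p x y = 0 := by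
  have hD := symRewardDen_pos ha hk hp0 hx hy
  have hderiv := hasDerivAt_symReward hD.ne'
  have hD2 := pow_pos hD 2
  have hM_nonneg (hx0 : 0 < x) : 0 ≤ symMarginal a k p x y := by
    simpa using (le_div_iff₀ hD2).mp (hmax.hasDerivAt_nonneg_of_lt hderiv hx hx0)
  have hxa : x < a := by
    refine lt_of_le_of_ne hx.2 fun hxa ↦ ?_
    have := hM_nonneg (hxa ▸ ha)
    rw [hxa] at this
    exact (symMarginal_right_neg ha hk hp0 hp1 hy.1 hy.2).not_ge this
  have hM : symMarginal a k p x y ≤ 0 := by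
    simpa using (div_le_iff₀ hD2).mp (hmax.hasDerivAt_nonpos_of_lt hderiv hx hxa)
  refine ⟨hxa, hM, ?_⟩
  rcases hx.1.eq_or_lt with hx0 | hx0
  · rw [← hx0, zero_mul]
  · rw [le_antisymm hM (hM_nonneg hx0), mul_zero]

theorem symMarginal_zero_pos (ha : 0 < a) (hp0 : 0 ≤ p) (hp1 : p < 1) (hy0 : 0 ≤ y)
    (hy : y * symMarginal a k p y 0 = 0) : 0 < symMarginal a k p 0 y := by
  have hq : 0 < 1 - p := by linarith
  rcases hy0.eq_or_lt with rfl | hy0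
  · have hid : symMarginal a k p 0 0 = (1-p) * a^4 := by
      simp only [symMarginal, symRewardNum, symRewardDen]; ring
    rw [hid]
    positivity
  · have hy' : symMarginal a k p y 0 = 0 := (mul_eq_zero.mp hy).resolve_left hy0.ne'
    have hid : symMarginal a k p 0 y * (y * (2*a + y)) =
        (1-p) * a * y * ((1-p) * (y^2 - a^2)^2 + (1+p) * a^2 * (y + a)^2)
          + y^2 * symMarginal a k p y 0 := by
      simp only [symMarginal, symRewardNum, symRewardDen]; ring
    rw [hy', mul_zero, add_zero] at hid
    refine pos_of_mul_pos_left ?_ (by positivity : 0 ≤ y * (2*a + y))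
    rw [hid]
    positivity

theorem pos_of_symMarginal_kkt (ha : 0 < a) (hp0 : 0 ≤ p) (hp1 : p < 1) (hx0 : 0 ≤ x)
    (hy0 : 0 ≤ y) (hx : symMarginal a k p x y ≤ 0) (hy : y * symMarginal a k p y x = 0) :
    0 < x := by
  refine lt_of_le_of_ne hx0 ?_
  rintro rfl
  exact (symMarginal_zero_pos ha hp0 hp1 hy0 hy).not_ge hx

theorem symMarginal_sub_symMarginal :
    symMarginal a k p x y - symMarginal a k p y x
      = (x - y) * (a * (1-p) * ((1-p) * (2*a^2 - (x + y - a)^2) - 2*a^2*k)) := by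
  simp only [symMarginal, symRewardNum, symRewardDen]; ring

theorem eq_of_symMarginal_eq (ha : 0 < a) (hk : 2 < k) (hp0 : 0 ≤ p) (hp1 : p < 1)
    (h : symMarginal a k p x y = symMarginal a k p y x) : x = y := by
  have hneg : a * (1-p) * ((1-p) * (2*a^2 - (x + y - a)^2) - 2*a^2*k) < 0 := by
    refine mul_neg_of_pos_of_neg (mul_pos ha (by linarith)) ?_
    nlinarith [mul_nonneg (by linarith : (0:ℝ) ≤ 1 - p) (sq_nonneg (x + y - a)), sq_pos_of_pos ha]
  have := symMarginal_sub_symMarginal (a := a) (k := k) (p := p) (x := x) (y := y)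
  rw [h, sub_self, eq_comm, mul_eq_zero] at this
  exact sub_eq_zero.mp (this.resolve_right hneg.ne)

theorem symMarginal_diag :
    symMarginal a k p x x = a * (1-p) * (2*x + a) * (2*(1-p)*x^2 - (2*k-1-p)*a*x + a^2) := by
  simp only [symMarginal, symRewardNum, symRewardDen]; ring

theorem quadratic_of_symMarginal_diag_eq_zero (ha : 0 < a) (hp1 : p < 1) (hx0 : 0 ≤ x)
    (h : symMarginal a k p x x = 0) : 2*(1-p)*x^2 - (2*k-1-p)*a*x + a^2 = 0 := by
  rw [symMarginal_diag] at h
  have : 0 < 1 - p := by linarith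
  exact (mul_eq_zero.mp h).resolve_left (by positivity)

theorem ppoa_diag_quadratic (hxa : (1-p) * x < a)
    (hx : 2*(1-p)*x^2 - (2*k-1-p)*a*x + a^2 = 0) :
    2*(k-2)*(ppoa a a p x x)^2 - (2*k-5-p)*ppoa a a p x x - 2 = 0 := by
  have hw : a - (1-p)*x ≠ 0 := by linarith
  have hP : ppoa a a p x x = a / (a - (1-p)*x) := by
    rw [ppoa, show a + a - (1-p)*(x + x) = 2 * (a - (1-p)*x) by ring, ← two_mul,
      mul_div_mul_left _ _ two_ne_zero]
  rw [hP, div_pow]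
  field_simp
  linear_combination (-(1-p)) * hx

theorem ppoa_eq_ppoaFormula_of_isMaxOn (ha : 0 < a) (hk : 2 < k) (hp0 : 0 ≤ p) (hp1 : p < 1)
    (hx : x ∈ Icc 0 a) (hy : y ∈ Icc 0 a)
    (hmax₁ : IsMaxOn (fun u => symReward a k p u y) (Icc 0 a) x)
    (hmax₂ : IsMaxOn (fun u => symReward a k p u x) (Icc 0 a) y) :
    ppoa a a p x y = ppoaFormula p k := by
  obtain ⟨hxa, hMx, hxMx⟩ := symMarginal_kkt_of_isMaxOn ha hk hp0 hp1 hx hy hmax₁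
  obtain ⟨-, hMy, hyMy⟩ := symMarginal_kkt_of_isMaxOn ha hk hp0 hp1 hy hx hmax₂
  have hx0 := pos_of_symMarginal_kkt ha hp0 hp1 hx.1 hy.1 hMx hyMy
  have hy0 := pos_of_symMarginal_kkt ha hp0 hp1 hy.1 hx.1 hMy hxMx
  have hMx0 := (mul_eq_zero.mp hxMx).resolve_left hx0.ne'
  have hMy0 := (mul_eq_zero.mp hyMy).resolve_left hy0.ne'
  obtain rfl := eq_of_symMarginal_eq ha hk hp0 hp1 (hMx0.trans hMy0.symm)
  have hquad := quadratic_of_symMarginal_diag_eq_zero ha hp1 hx.1 hMx0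
  have hxa' : (1-p) * x < a := by nlinarith
  refine eq_ppoaFormula_of_quadratic hk ?_ (ppoa_diag_quadratic hxa' hquad)
  exact div_pos (by linarith) (by linarith)

end SymmetricGame

theorem stmt18 (m1 m2 t p k : ℝ) (hm1 : 0 < m1)
    (hp0 : 0 ≤ p) (hp1 : p < 1) (hk : 2 < k)
    (h1 : m1 = (m1+m2+t)/k) (h2 : m2 = (m1+m2+t)/k) :
    (∀ x1s x2s : ℝ, IsNash m1 m2 t p x1s x2s →
      (m1 + m2) / (m1 + m2 - (1-p)*(x1s + x2s)) =
        Real.sqrt ((1+p)^2/(16*(k-2)^2) + 4*(3-p)/(16*(k-2)) + 1/4)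
          + 1/2 - (p+1)/(4*(k-2))) ∧
    Filter.Tendsto (fun k' : ℝ =>
        Real.sqrt ((1+p)^2/(16*(k'-2)^2) + 4*(3-p)/(16*(k'-2)) + 1/4)
          + 1/2 - (p+1)/(4*(k'-2)))
      Filter.atTop (nhds 1) := by
  have htot : m1 + m2 + t = k * m1 := by
    rw [mul_comm, (eq_div_iff (by linarith : k ≠ 0)).mp h1]
  obtain rfl : m2 = m1 := h2.trans h1.symm
  refine ⟨fun x y ⟨hx, hy, hbr₁, hbr₂⟩ ↦ ?_, tendsto_ppoaFormula p⟩
  refine ppoa_eq_ppoaFormula_of_isMaxOn hm1 hk hp0 hp1 hx hy ?_ ?_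
  · exact isMaxOn_iff.mpr fun u hu ↦ by simpa only [r1_eq_symReward htot] using hbr₁ u hu
  · exact isMaxOn_iff.mpr fun u hu ↦ by simpa only [r2_eq_symReward htot] using hbr₂ u hu
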